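/- For each fixed integer n ≥ 4, every real root of f_1(λ) = λ^5 - (n+2)λ^3 - 8λ^2 + 3(n-5)λ + 2(n-4) is strictly less than n; in particular f_1(n) > 0. -/
import Mathlib

theorem stmt_14 (n : ℤ) (hn : 4 ≤ n) :
    (∀ x : ℝ, x ^ 5 - ((n : ℝ) + 2) * x ^ 3 - 8 * x ^ 2 + 3 * ((n : ℝ) - 5) * x +
        2 * ((n : ℝ) - 4) = 0 → x < n) ∧
    0 < (n : ℝ) ^ 5 - ((n : ℝ) + 2) * (n : ℝ) ^ 3 - 8 * (n : ℝ) ^ 2 +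
        3 * ((n : ℝ) - 5) * (n : ℝ) + 2 * ((n : ℝ) - 4) := by
  have hn' : (4 : ℝ) ≤ (n : ℝ) := by exact_mod_cast hn
  constructor
  · intro x hx
    by_contra h
    push_neg at h
    have hx4 : (4 : ℝ) ≤ x := le_trans hn' h
    nlinarith [pow_pos (by linarith : (0:ℝ) < x) 3, pow_pos (by linarith : (0:ℝ) < x) 4,
      pow_pos (by linarith : (0:ℝ) < x) 2, mul_nonneg (by linarith : (0:ℝ) ≤ x - (n:ℝ)) (pow_pos (by linarith : (0:ℝ) < x) 3).le,
      sq_nonneg (x - 4), sq_nonneg x]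
  · nlinarith [pow_pos (by linarith : (0:ℝ) < (n:ℝ)) 3, pow_pos (by linarith : (0:ℝ) < (n:ℝ)) 4, sq_nonneg ((n:ℝ) - 4)]
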